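/- arXiv:2305.09661 — 2 statements merged into one kernel-verified Lean document; each statement's English description precedes it below -/
import Mathlib

section
/- Block Gershgorin invertibility for a 2×2 block matrix: let M = [[A, B], [C, D]] with A and D invertible n×n real matrices. If ‖A⁻¹ B‖₂ < 1 and ‖D⁻¹ C‖₂ < 1 (operator 2-norms), then M (as a 2n×2n matrix) is invertible. -/
noncomputable def specNorm {m : Type*} [Fintype m] [DecidableEq m]
    (M : Matrix m m ℝ) : ℝ :=
  ‖Matrix.toEuclideanCLM (𝕜 := ℝ) M‖

theorem stmt12 (n : ℕ) (A B C D : Matrix (Fin n) (Fin n) ℝ)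
    (hA : IsUnit A) (hD : IsUnit D)
    (hAB : specNorm (A⁻¹ * B) < 1) (hDC : specNorm (D⁻¹ * C) < 1) :
    IsUnit (Matrix.fromBlocks A B C D) := by
  haveI := hD.invertible
  haveI := hA.invertible
  -- the key product has spectral norm < 1
  set X := A⁻¹ * B
  set Y := D⁻¹ * C
  have hXY : IsUnit (1 - X * Y) := by
    let f := Matrix.toEuclideanCLM (𝕜 := ℝ) (n := Fin n)
    have hn : ‖f (X * Y)‖ < 1 := by
      calc ‖f (X * Y)‖ = ‖f X * f Y‖ := by rw [map_mul]
        _ ≤ ‖f X‖ * ‖f Y‖ := norm_mul_le _ _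
        _ < 1 := by
            have h1 : 0 ≤ ‖f X‖ := norm_nonneg _
            have h2 : 0 ≤ ‖f Y‖ := norm_nonneg _
            have hAB' : ‖f X‖ < 1 := hAB
            have hDC' : ‖f Y‖ < 1 := hDC
            nlinarith
    have : IsUnit (1 - f (X * Y)) := (Units.oneSub _ hn).isUnit
    have hmap : (1 : Matrix (Fin n) (Fin n) ℝ) - X * Y = f.symm (1 - f (X * Y)) := by
      rw [map_sub, map_one, StarAlgEquiv.symm_apply_apply]
    rw [hmap]
    exact this.map f.symm
  have hSchur : IsUnit (A - B * ⅟D * C) := by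
    have : A - B * ⅟D * C = A * (1 - X * Y) := by
      rw [Matrix.invOf_eq_nonsing_inv]
      simp only [X, Y, Matrix.mul_sub, Matrix.mul_one, mul_assoc]
      rw [← mul_assoc A A⁻¹, Matrix.mul_nonsing_inv _ (Matrix.isUnit_iff_isUnit_det _ |>.mp hA),
        one_mul]
    rw [this]
    exact hA.mul hXY
  haveI := hSchur.invertible
  letI := Matrix.fromBlocks₂₂Invertible A B C D
  exact isUnit_of_invertible _
end

section
/- If a 2×2 block matrix M = [[A, B], [C, D]] with A, D invertible has eigenvalue 0 (i.e., M is singular), then ‖A⁻¹ B‖₂ ≥ 1 or ‖D⁻¹ C‖₂ ≥ 1. -/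
open Matrix

theorem ContinuousLinearMap.eq_zero_of_apply_eq_self_of_norm_lt_one {𝕜 E : Type*}
    [NontriviallyNormedField 𝕜] [NormedAddCommGroup E] [NormedSpace 𝕜 E] {f : E →L[𝕜] E}
    (hf : ‖f‖ < 1) {x : E} (hx : f x = x) : x = 0 := by
  have h : ‖x‖ ≤ ‖f‖ * ‖x‖ := by simpa only [hx] using f.le_opNorm x
  exact norm_eq_zero.1 (by nlinarith [norm_nonneg x])

namespace Matrix

variable {m n K : Type*} [Fintype m] [Fintype n] [DecidableEq m] [Field K]

theorem eq_neg_mulVec_of_mulVec_add_mulVec_eq_zero {A : Matrix m m K} {B : Matrix m n K}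
    {x : m → K} {y : n → K} (hA : IsUnit A) (h : A *ᵥ x + B *ᵥ y = 0) :
    x = -((A⁻¹ * B) *ᵥ y) := by
  have hAdet := (isUnit_iff_isUnit_det A).1 hA
  rw [← mulVec_mulVec, ← mulVec_neg, ← eq_neg_of_add_eq_zero_left h, mulVec_mulVec,
    nonsing_inv_mul A hAdet, one_mulVec]

theorem exists_ne_zero_mulVec_eq_self_of_not_isUnit_fromBlocks [DecidableEq n]
    {A : Matrix m m K} {B : Matrix m n K} {C : Matrix n m K} {D : Matrix n n K} (hA : IsUnit A) (hD : IsUnit D)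
    (hM : ¬IsUnit (fromBlocks A B C D)) :
    ∃ u ≠ 0, (A⁻¹ * B * (D⁻¹ * C)) *ᵥ u = u := by
  obtain ⟨v, hv0, hv⟩ := exists_mulVec_eq_zero_iff.2 <| by
    simpa [isUnit_iff_isUnit_det] using hM
  rw [fromBlocks_mulVec, ← Sum.elim_zero_zero, Sum.elim_eq_iff] at hv
  obtain ⟨hAB, hCD⟩ := hv
  have hu := eq_neg_mulVec_of_mulVec_add_mulVec_eq_zero hA hAB
  have hw := eq_neg_mulVec_of_mulVec_add_mulVec_eq_zero hD ((add_comm _ _).trans hCD)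
  refine ⟨v ∘ Sum.inl, fun hu0 => hv0 ?_, ?_⟩
  · rw [← Sum.elim_comp_inl_inr v, hw, hu0]
    simp
  · rw [← mulVec_mulVec, ← neg_eq_iff_eq_neg.2 hw, mulVec_neg, ← hu]

end Matrix

section specNorm

variable {m : Type*} [Fintype m] [DecidableEq m]

theorem specNorm_nonneg (X : Matrix m m ℝ) : 0 ≤ specNorm X := norm_nonneg _

theorem specNorm_mul_le (X Y : Matrix m m ℝ) : specNorm (X * Y) ≤ specNorm X * specNorm Y := by
  rw [specNorm, specNorm, specNorm, map_mul]
  exact norm_mul_le _ _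

theorem eq_zero_of_mulVec_eq_self_of_specNorm_lt_one {X : Matrix m m ℝ} (hX : specNorm X < 1)
    {u : m → ℝ} (hu : X *ᵥ u = u) : u = 0 := by
  have h : WithLp.toLp 2 u = 0 :=
    (toEuclideanCLM (𝕜 := ℝ) X).eq_zero_of_apply_eq_self_of_norm_lt_one hX
      (by rw [toEuclideanCLM_toLp, hu])
  simpa using h

end specNorm

theorem stmt13 (n : ℕ) (A B C D : Matrix (Fin n) (Fin n) ℝ)
    (hA : IsUnit A) (hD : IsUnit D)
    (hsing : ¬ IsUnit (Matrix.fromBlocks A B C D)) :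
    1 ≤ specNorm (A⁻¹ * B) ∨ 1 ≤ specNorm (D⁻¹ * C) := by
  by_contra! h
  obtain ⟨u, hu0, hu⟩ := exists_ne_zero_mulVec_eq_self_of_not_isUnit_fromBlocks hA hD hsing
  have hlt : specNorm (A⁻¹ * B * (D⁻¹ * C)) < 1 :=
    (specNorm_mul_le _ _).trans_lt
      (mul_lt_one_of_nonneg_of_lt_one_left (specNorm_nonneg _) h.1 h.2.le)
  exact hu0 (eq_zero_of_mulVec_eq_self_of_specNorm_lt_one hlt hu)
end
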